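/- arXiv:1605.07409 — 3 statements merged into one kernel-verified Lean document; each statement's English description precedes it below -/
import Mathlib

section
/- Let A be a Banach algebra admitting a nonzero multiplicative linear functional φ. Then no elementary operator E(s) = Σ_{j=1}^n a_j s b_j on A is hypercyclic. -/
/-- A geometric orbit `k ↦ l^k * c` is never dense in `ℂ`. -/
lemma geom_not_dense (l c : ℂ) : ¬ Dense (Set.range fun k : ℕ => l ^ k * c) := by
  intro h
  rw [Metric.dense_iff] at h
  by_cases hc : c = 0
  · obtain ⟨y, hy, k, hk⟩ := h 1 (1/2) (by norm_num)
    simp [hc] at hk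
    subst hk
    simp [Complex.dist_eq] at hy
    norm_num at hy
  · by_cases hl : ‖l‖ ≤ 1
    · -- all orbit points have norm ≤ ‖c‖; point of norm ‖c‖+2 is far
      obtain ⟨y, hy, k, hk⟩ := h ((‖c‖ + 2 : ℝ) : ℂ) 1 one_pos
      subst hk
      rw [Metric.mem_ball, dist_eq_norm] at hy
      have h1 : ‖l ^ k * c‖ ≤ ‖c‖ := by
        rw [norm_mul, norm_pow]
        nlinarith [pow_le_one₀ (norm_nonneg l) hl (n := k), norm_nonneg c,
          pow_nonneg (norm_nonneg l) k]
      have h2 : |‖l ^ k * c‖ - ‖((‖c‖ + 2 : ℝ) : ℂ)‖| ≤ ‖l ^ k * c - ((‖c‖ + 2 : ℝ) : ℂ)‖ :=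
        abs_norm_sub_norm_le _ _
      have h3 : ‖((‖c‖ + 2 : ℝ) : ℂ)‖ = ‖c‖ + 2 := by
        rw [Complex.norm_real, Real.norm_eq_abs, abs_of_nonneg]
        positivity
      rw [h3, abs_sub_comm, abs_of_nonneg (by linarith)] at h2
      linarith
    · push_neg at hl
      -- norms are ‖c‖ * ‖l‖^k : either ≤ ‖c‖ (k=0) or ≥ ‖c‖‖l‖ (k ≥ 1)
      set r := ‖c‖ with hr
      set L := ‖l‖ with hL
      have hr0 : 0 < r := norm_pos_iff.mpr hc
      have hε : 0 < r * (L - 1) / 4 := by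
        have : 0 < L - 1 := by linarith
        positivity
      obtain ⟨y, hy, k, hk⟩ := h ((r * (1 + L) / 2 : ℝ) : ℂ) (r * (L - 1) / 4) hε
      subst hk
      rw [Metric.mem_ball, dist_eq_norm] at hy
      have htarget : ‖((r * (1 + L) / 2 : ℝ) : ℂ)‖ = r * (1 + L) / 2 := by
        rw [Complex.norm_real, Real.norm_eq_abs, abs_of_nonneg]
        nlinarith
      have hnorm : ‖l ^ k * c‖ = L ^ k * r := by rw [norm_mul, norm_pow]
      have key : |r * (1 + L) / 2 - L ^ k * r| < r * (L - 1) / 4 := by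
        have h2 := abs_norm_sub_norm_le (l ^ k * c) ((r * (1 + L) / 2 : ℝ) : ℂ)
        rw [htarget, hnorm, abs_sub_comm] at h2
        linarith
      rcases Nat.eq_zero_or_pos k with hk0 | hk1
      · subst hk0
        simp only [pow_zero, one_mul] at key
        rw [abs_lt] at key
        nlinarith [key.1, key.2]
      · have hLk : L ^ k ≥ L := by
          calc L = L ^ 1 := (pow_one L).symm
          _ ≤ L ^ k := pow_le_pow_right₀ (le_of_lt hl) hk1
        have : L ^ k * r ≥ L * r := by nlinarith
        rw [abs_lt] at key
        nlinarith [key.1, key.2]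

/-- no elementary operator on a Banach algebra admitting a nonzero
multiplicative linear functional is hypercyclic. -/
theorem stmt_2 {A : Type*} [NormedRing A] [NormedAlgebra ℂ A] [CompleteSpace A]
    (φ : A →ₐ[ℂ] ℂ) (hφ : (φ : A → ℂ) ≠ 0) (n : ℕ) (a b : Fin n → A) :
    ¬ ∃ s : A, Dense (Set.range fun k : ℕ => (fun t => ∑ j, a j * t * b j)^[k] s) := by
  rintro ⟨s, hs⟩
  set E : A → A := fun t => ∑ j, a j * t * b j with hE
  set l : ℂ := ∑ j, φ (a j) * φ (b j) with hl
  -- φ (E t) = l * φ t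
  have hEφ : ∀ t : A, φ (E t) = l * φ t := by
    intro t
    simp only [hE, map_sum, map_mul, hl, Finset.sum_mul]
    congr 1
    ext j
    ring
  have horb : ∀ k : ℕ, φ (E^[k] s) = l ^ k * φ s := by
    intro k
    induction k with
    | zero => simp
    | succ m ih =>
      rw [Function.iterate_succ_apply', hEφ, ih, pow_succ]
      ring
  -- φ is continuous with dense range
  have hsurj : Function.Surjective φ := fun z => ⟨algebraMap ℂ A z, φ.commutes z⟩
  have hcont : Continuous φ := map_continuous φ
  have hdr : DenseRange (fun k : ℕ => φ (E^[k] s)) := by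
    have : DenseRange (φ ∘ fun k : ℕ => E^[k] s) :=
      DenseRange.comp hsurj.denseRange hs hcont
    exact this
  have : DenseRange (fun k : ℕ => l ^ k * φ s) := by
    convert hdr using 2 with k
    exact (horb k).symm
  exact geom_not_dense l (φ s) this
end

section
/- If A, B ∈ L(X) are such that A* has an eigenvalue and B has an eigenvalue, then the generalised derivation τ_{A,B}(T) = AT - TB is not hypercyclic on L(X) (with the operator norm topology). -/
/-!
Evaluating at an eigenvector `x` of `B` and then applying an eigenvector `x*` of `A*` gives a
continuous functional `φ T = x* (T x)` on `L(X)` with `φ (A T - T B) = (α - β) φ T`. It is nonzero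
by Hahn–Banach, hence surjective onto `ℂ`, so it maps any orbit of `τ_{A,B}` onto a geometric
sequence `(α - β)ⁿ φ T₀`, which is never dense in `ℂ`.
-/

open Function Set Metric

theorem not_denseRange_pow_mul {𝕜 : Type*} [NontriviallyNormedField 𝕜] (c z : 𝕜) :
    ¬ DenseRange fun n : ℕ => c ^ n * z := by
  intro hdense
  have eq_univ : ∀ C : Set 𝕜, IsClosed C → range (fun n : ℕ => c ^ n * z) ⊆ C → C = univ :=
    fun C hC hsub => by simpa [hC.closure_eq] using (hdense.mono hsub).closure_eq
  by_cases hbounded : ‖c‖ ≤ 1 ∨ z = 0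
  · have hsub : range (fun n : ℕ => c ^ n * z) ⊆ closedBall 0 ‖z‖ := by
      rintro _ ⟨n, rfl⟩
      rcases hbounded with hc | rfl
      · simpa [norm_pow] using mul_le_of_le_one_left (norm_nonneg z) (pow_le_one₀ (norm_nonneg c) hc)
      · simp
    obtain ⟨w, hw⟩ := NormedField.exists_lt_norm 𝕜 ‖z‖
    have hw_mem := eq_univ _ isClosed_closedBall hsub ▸ mem_univ w
    exact (mem_closedBall_zero_iff.mp hw_mem).not_gt hw
  · push Not at hbounded
    obtain ⟨hc, hz⟩ := hbounded
    have hsub : range (fun n : ℕ => c ^ n * z) ⊆ (ball 0 ‖z‖)ᶜ := by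
      rintro _ ⟨n, rfl⟩
      simpa [norm_pow] using le_mul_of_one_le_left (norm_nonneg z) (one_le_pow₀ hc.le)
    have h0 := eq_univ _ isOpen_ball.isClosed_compl hsub ▸ mem_univ (0 : 𝕜)
    exact h0 (mem_ball_self (norm_pos_iff.mpr hz))

theorem not_dense_orbit_of_semiconj_mul {E 𝕜 : Type*} [TopologicalSpace E]
    [NontriviallyNormedField 𝕜] {f : E → E} {φ : E → 𝕜} (hφc : Continuous φ)
    (hφs : Surjective φ) {c : 𝕜} (h : ∀ y, φ (f y) = c * φ y) (y₀ : E) :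
    ¬ Dense (range fun n : ℕ => f^[n] y₀) := by
  intro hdense
  have hsemiconj : Semiconj φ f (c * ·) := h
  have himage : DenseRange (φ ∘ fun n : ℕ => f^[n] y₀) := hφs.denseRange.comp hdense hφc
  refine not_denseRange_pow_mul c (φ y₀) ?_
  convert himage using 2 with n
  simp [hsemiconj.iterate_right n y₀]

theorem ContinuousLinearMap.surjective_apply {𝕜 E F : Type*} [RCLike 𝕜] [NormedAddCommGroup E]
    [NormedSpace 𝕜 E] [NormedAddCommGroup F] [NormedSpace 𝕜 F] {x : E} (hx : x ≠ 0) :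
    Surjective fun T : E →L[𝕜] F => T x := by
  intro y
  obtain ⟨g, -, hgx⟩ := exists_dual_vector 𝕜 x (norm_ne_zero_iff.mpr hx)
  have hnorm : (‖x‖ : 𝕜) ≠ 0 := RCLike.ofReal_ne_zero.mpr (norm_ne_zero_iff.mpr hx)
  exact ⟨g.smulRight ((‖x‖ : 𝕜)⁻¹ • y), by simp [hgx, smul_smul, hnorm]⟩

theorem ContinuousLinearMap.apply_comp_sub_comp_apply {𝕜 E : Type*} [NontriviallyNormedField 𝕜]
    [NormedAddCommGroup E] [NormedSpace 𝕜 E] {A B : E →L[𝕜] E} {xs : E →L[𝕜] 𝕜} {α β : 𝕜}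
    {x : E} (hA : xs.comp A = α • xs) (hB : B x = β • x) (T : E →L[𝕜] E) :
    xs ((A.comp T - T.comp B) x) = (α - β) * xs (T x) := by
  have hAT : xs (A (T x)) = α * xs (T x) := by simpa using congr($hA (T x))
  simp [hAT, hB, sub_mul]

theorem stmt_6_general {X : Type*} [NormedAddCommGroup X] [NormedSpace ℂ X]
    (A B : X →L[ℂ] X)
    (xs : X →L[ℂ] ℂ) (hxs : xs ≠ 0) (α : ℂ) (hA : xs.comp A = α • xs)
    (x : X) (hx : x ≠ 0) (β : ℂ) (hB : B x = β • x) :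
    ∀ T₀ : X →L[ℂ] X,
      ¬ Dense (Set.range fun n : ℕ => (fun T => A.comp T - T.comp B)^[n] T₀) := by
  set φ : (X →L[ℂ] X) →L[ℂ] ℂ := xs.comp (ContinuousLinearMap.apply ℂ X x)
  have hφ : φ ≠ 0 := by
    obtain ⟨y, hy⟩ : ∃ y, xs y ≠ 0 := by
      by_contra! h
      exact hxs (ContinuousLinearMap.ext h)
    obtain ⟨T, rfl⟩ := ContinuousLinearMap.surjective_apply (𝕜 := ℂ) (F := X) hx y
    exact fun h => hy congr($h T)
  exact not_dense_orbit_of_semiconj_mul φ.continuous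
    (LinearMap.surjective_of_ne_zero (ContinuousLinearMap.coe_injective.ne hφ))
    (ContinuousLinearMap.apply_comp_sub_comp_apply hA hB)

/-- if `A*` and `B` both have eigenvalues then the generalised
derivation `T ↦ AT - TB` is not hypercyclic on `L(X)`. -/
theorem stmt_6 {X : Type*} [NormedAddCommGroup X] [NormedSpace ℂ X] [CompleteSpace X]
    (A B : X →L[ℂ] X)
    (xs : X →L[ℂ] ℂ) (hxs : xs ≠ 0) (α : ℂ) (hA : xs.comp A = α • xs)
    (x : X) (hx : x ≠ 0) (β : ℂ) (hB : B x = β • x) :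
    ∀ T₀ : X →L[ℂ] X,
      ¬ Dense (Set.range fun n : ℕ => (fun T => A.comp T - T.comp B)^[n] T₀) :=
  stmt_6_general A B xs hxs α hA x hx β hB
end

section
/- Let H be a complex Hilbert space, and let A, B ∈ L(H) with A hyponormal (‖A*x‖ ≤ ‖Ax‖ for all x) and B* hyponormal (‖Bx‖ ≤ ‖B*x‖ for all x). Then the generalised derivation τ(T) = AT - TB on the Hilbert-Schmidt class C₂(H) is hyponormal: τ*τ - ττ* ≥ 0 as an operator on the Hilbert space C₂(H). -/
open scoped InnerProductSpace

section Helpers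

variable {H : Type*} [NormedAddCommGroup H] [InnerProductSpace ℂ H]
  [CompleteSpace H] {ι : Type*} (e : HilbertBasis ι ℂ H)

local notation "adj" => ContinuousLinearMap.adjoint

private lemma hasSum_parseval (x : H) :
    HasSum (fun j => ‖⟪e j, x⟫_ℂ‖ ^ 2) (‖x‖ ^ 2) := by
  have h := e.hasSum_inner_mul_inner x x
  have h2 : ∀ j : ι, ⟪x, e j⟫_ℂ * ⟪e j, x⟫_ℂ = ((‖⟪e j, x⟫_ℂ‖ ^ 2 : ℝ) : ℂ) := by
    intro j
    rw [← inner_conj_symm x (e j), RCLike.conj_mul]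
    norm_cast
  simp only [h2] at h
  have h3 := h.mapL (RCLike.reCLM (K := ℂ))
  simp only [RCLike.reCLM_apply, RCLike.ofReal_re, inner_self_eq_norm_sq] at h3
  exact h3

private lemma hs_prod_summable (U : H →L[ℂ] H)
    (hU : Summable fun i => ‖U (e i)‖ ^ 2) :
    Summable fun p : ι × ι => ‖⟪e p.2, U (e p.1)⟫_ℂ‖ ^ 2 := by
  rw [summable_prod_of_nonneg (fun p => by positivity)]
  refine ⟨fun i => (hasSum_parseval e (U (e i))).summable, ?_⟩
  have h : ∀ i : ι, ∑' j, ‖⟪e j, U (e i)⟫_ℂ‖ ^ 2 = ‖U (e i)‖ ^ 2 :=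
    fun i => (hasSum_parseval e (U (e i))).tsum_eq
  simp only [h]
  exact hU

private lemma hs_adjoint (U : H →L[ℂ] H)
    (hU : Summable fun i => ‖U (e i)‖ ^ 2) :
    Summable fun i => ‖(adj U) (e i)‖ ^ 2 := by
  have h1 := hs_prod_summable e U hU
  have h2 : Summable fun p : ι × ι => ‖⟪e p.2, (adj U) (e p.1)⟫_ℂ‖ ^ 2 := by
    have hswap := h1.prod_symm
    have heq : (fun p : ι × ι => ‖⟪e p.2, (adj U) (e p.1)⟫_ℂ‖ ^ 2)
        = fun p : ι × ι => ‖⟪e p.swap.2, U (e p.swap.1)⟫_ℂ‖ ^ 2 := by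
      funext p
      rw [norm_inner_symm, ContinuousLinearMap.adjoint_inner_left]
      rfl
    rw [heq]
    exact hswap
  have h3 := (summable_prod_of_nonneg (fun p => by positivity)).mp h2
  have h : ∀ i : ι, ∑' j, ‖⟪e j, (adj U) (e i)⟫_ℂ‖ ^ 2 = ‖(adj U) (e i)‖ ^ 2 :=
    fun i => (hasSum_parseval e ((adj U) (e i))).tsum_eq
  have h4 := h3.2
  simp only [h] at h4
  exact h4

private lemma hs_comp_left (C U : H →L[ℂ] H)
    (hU : Summable fun i => ‖U (e i)‖ ^ 2) :
    Summable fun i => ‖(C.comp U) (e i)‖ ^ 2 := by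
  refine Summable.of_nonneg_of_le (fun i => by positivity) (fun i => ?_) (hU.mul_left (‖C‖ ^ 2))
  have h := C.le_opNorm (U (e i))
  calc ‖(C.comp U) (e i)‖ ^ 2 = ‖C (U (e i))‖ ^ 2 := rfl
    _ ≤ (‖C‖ * ‖U (e i)‖) ^ 2 := by
        apply pow_le_pow_left₀ (norm_nonneg _) h
    _ = ‖C‖ ^ 2 * ‖U (e i)‖ ^ 2 := by ring

private lemma hs_comp_right (U C : H →L[ℂ] H)
    (hU : Summable fun i => ‖U (e i)‖ ^ 2) :
    Summable fun i => ‖(U.comp C) (e i)‖ ^ 2 := by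
  have h1 := hs_adjoint e U hU
  have h2 := hs_comp_left e (adj C) (adj U) h1
  have h3 := hs_adjoint e ((adj C).comp (adj U)) h2
  have : adj ((adj C).comp (adj U)) = U.comp C := by
    rw [ContinuousLinearMap.adjoint_comp]
    simp
  simpa [this] using h3

private lemma hs_summable_inner (U V : H →L[ℂ] H)
    (hU : Summable fun i => ‖U (e i)‖ ^ 2)
    (hV : Summable fun i => ‖V (e i)‖ ^ 2) :
    Summable fun i => ⟪U (e i), V (e i)⟫_ℂ := by
  apply Summable.of_norm
  refine Summable.of_nonneg_of_le (fun i => norm_nonneg _) (fun i => ?_)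
    ((hU.add hV).div_const 2)
  have h1 := norm_inner_le_norm (𝕜 := ℂ) (U (e i)) (V (e i))
  have h2 : ‖U (e i)‖ * ‖V (e i)‖ ≤ (‖U (e i)‖ ^ 2 + ‖V (e i)‖ ^ 2) / 2 := by
    nlinarith [sq_nonneg (‖U (e i)‖ - ‖V (e i)‖)]
  linarith

private lemma hs_trace_swap (U V : H →L[ℂ] H)
    (hU : Summable fun i => ‖U (e i)‖ ^ 2)
    (hV : Summable fun i => ‖V (e i)‖ ^ 2) :
    ∑' i, ⟪U (e i), V (e i)⟫_ℂ = ∑' j, ⟪(adj V) (e j), (adj U) (e j)⟫_ℂ := by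
  set f : ι → ι → ℂ := fun i j => ⟪U (e i), e j⟫_ℂ * ⟪e j, V (e i)⟫_ℂ with hf_def
  have hf : Summable (Function.uncurry f) := by
    apply Summable.of_norm
    refine Summable.of_nonneg_of_le (fun p => norm_nonneg _) (fun p => ?_)
      (((hs_prod_summable e U hU).add (hs_prod_summable e V hV)).div_const 2)
    have h1 : ‖Function.uncurry f p‖
        = ‖⟪e p.2, U (e p.1)⟫_ℂ‖ * ‖⟪e p.2, V (e p.1)⟫_ℂ‖ := by
      show ‖f p.1 p.2‖ = _
      rw [hf_def]
      simp only [norm_mul]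
      rw [norm_inner_symm (U (e p.1)) (e p.2)]
    rw [h1]
    nlinarith [sq_nonneg (‖⟪e p.2, U (e p.1)⟫_ℂ‖ - ‖⟪e p.2, V (e p.1)⟫_ℂ‖),
      norm_nonneg (⟪e p.2, U (e p.1)⟫_ℂ), norm_nonneg (⟪e p.2, V (e p.1)⟫_ℂ)]
  have key1 : ∀ i : ι, ∑' j, f i j = ⟪U (e i), V (e i)⟫_ℂ :=
    fun i => e.tsum_inner_mul_inner (U (e i)) (V (e i))
  have key2 : ∀ j : ι, ∑' i, f i j = ⟪(adj V) (e j), (adj U) (e j)⟫_ℂ := by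
    intro j
    have h1 : ∀ i : ι, f i j = ⟪(adj V) (e j), e i⟫_ℂ * ⟪e i, (adj U) (e j)⟫_ℂ := by
      intro i
      rw [hf_def]
      simp only
      rw [ContinuousLinearMap.adjoint_inner_left V, ContinuousLinearMap.adjoint_inner_right U]
      ring
    simp only [h1]
    exact e.tsum_inner_mul_inner ((adj V) (e j)) ((adj U) (e j))
  calc ∑' i, ⟪U (e i), V (e i)⟫_ℂ = ∑' i, ∑' j, f i j := by
        simp only [key1]
    _ = ∑' j, ∑' i, f i j := (Summable.tsum_comm hf).symm
    _ = ∑' j, ⟪(adj V) (e j), (adj U) (e j)⟫_ℂ := by simp only [key2]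

end Helpers

set_option maxHeartbeats 1000000 in
/-- the generalised derivation induced by a hyponormal `A` and a
co-hyponormal `B` is hyponormal on the Hilbert-Schmidt class: the quadratic form
of `τ*τ - ττ*` (computed via an orthonormal basis, as the Hilbert-Schmidt inner
product) is nonnegative. -/
theorem stmt_9 {H : Type*} [NormedAddCommGroup H] [InnerProductSpace ℂ H]
    [CompleteSpace H] {ι : Type*} (e : HilbertBasis ι ℂ H)
    (A B : H →L[ℂ] H)
    (hA : ∀ x : H, ‖(ContinuousLinearMap.adjoint A) x‖ ≤ ‖A x‖)
    (hB : ∀ x : H, ‖B x‖ ≤ ‖(ContinuousLinearMap.adjoint B) x‖)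
    (T : H →L[ℂ] H) (hT : Summable fun i => ‖T (e i)‖ ^ 2) :
    0 ≤ ∑' i, RCLike.re
      (⟪((fun S => (ContinuousLinearMap.adjoint A).comp S - S.comp (ContinuousLinearMap.adjoint B))
            ((fun S => A.comp S - S.comp B) T)
          - (fun S => A.comp S - S.comp B)
            ((fun S => (ContinuousLinearMap.adjoint A).comp S - S.comp (ContinuousLinearMap.adjoint B)) T))
          (e i), T (e i)⟫_ℂ) := by
  classical
  beta_reduce
  set A' := ContinuousLinearMap.adjoint A with hA'
  set B' := ContinuousLinearMap.adjoint B with hB'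
  set V1 : H →L[ℂ] H := T.comp (B.comp B') with hV1def
  set V2 : H →L[ℂ] H := T.comp (B'.comp B) with hV2def
  have key : ∀ i : ι,
      ((A'.comp (A.comp T - T.comp B) - (A.comp T - T.comp B).comp B')
          - (A.comp (A'.comp T - T.comp B') - (A'.comp T - T.comp B').comp B)) (e i)
        = (A' (A (T (e i))) - A (A' (T (e i)))) + (V1 (e i) - V2 (e i)) := by
    intro i
    simp only [hV1def, hV2def, ContinuousLinearMap.sub_apply, ContinuousLinearMap.comp_apply,
      map_sub]
    abel
  have key2 : ∀ i : ι,
      RCLike.re (⟪((A'.comp (A.comp T - T.comp B) - (A.comp T - T.comp B).comp B')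
          - (A.comp (A'.comp T - T.comp B') - (A'.comp T - T.comp B').comp B)) (e i),
        T (e i)⟫_ℂ)
      = (‖A (T (e i))‖ ^ 2 - ‖A' (T (e i))‖ ^ 2)
        + (RCLike.re ⟪V1 (e i), T (e i)⟫_ℂ - RCLike.re ⟪V2 (e i), T (e i)⟫_ℂ) := by
    intro i
    rw [key i, inner_add_left, inner_sub_left, inner_sub_left, map_add, map_sub, map_sub]
    congr 2
    · rw [hA', ContinuousLinearMap.adjoint_inner_left A, inner_self_eq_norm_sq]
    · rw [hA', ← ContinuousLinearMap.adjoint_inner_right A, inner_self_eq_norm_sq]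
  -- summability facts
  have hBB' : Summable fun i => ‖V1 (e i)‖ ^ 2 := hs_comp_right e T (B.comp B') hT
  have hB'B : Summable fun i => ‖V2 (e i)‖ ^ 2 := hs_comp_right e T (B'.comp B) hT
  have hAT : Summable fun i => ‖A (T (e i))‖ ^ 2 := hs_comp_left e A T hT
  have hA'T : Summable fun i => ‖A' (T (e i))‖ ^ 2 := hs_comp_left e A' T hT
  have s1 : Summable fun i => RCLike.re ⟪V1 (e i), T (e i)⟫_ℂ := by
    have := ((hs_summable_inner e V1 T hBB' hT).hasSum.mapL (RCLike.reCLM (K := ℂ))).summable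
    simpa using this
  have s2 : Summable fun i => RCLike.re ⟪V2 (e i), T (e i)⟫_ℂ := by
    have := ((hs_summable_inner e V2 T hB'B hT).hasSum.mapL (RCLike.reCLM (K := ℂ))).summable
    simpa using this
  have sg : Summable fun i => ‖A (T (e i))‖ ^ 2 - ‖A' (T (e i))‖ ^ 2 := hAT.sub hA'T
  -- split the sum
  have split : ∑' i, RCLike.re
      (⟪((A'.comp (A.comp T - T.comp B) - (A.comp T - T.comp B).comp B')
          - (A.comp (A'.comp T - T.comp B') - (A'.comp T - T.comp B').comp B)) (e i),
        T (e i)⟫_ℂ)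
      = (∑' i, (‖A (T (e i))‖ ^ 2 - ‖A' (T (e i))‖ ^ 2))
        + ((∑' i, RCLike.re ⟪V1 (e i), T (e i)⟫_ℂ)
            - ∑' i, RCLike.re ⟪V2 (e i), T (e i)⟫_ℂ) := by
    simp only [key2]
    rw [Summable.tsum_add sg (s1.sub s2), Summable.tsum_sub s1 s2]
  rw [split]
  -- HS adjoint of T
  have hT' : Summable fun j => ‖(ContinuousLinearMap.adjoint T) (e j)‖ ^ 2 := hs_adjoint e T hT
  set T' := ContinuousLinearMap.adjoint T with hT'def
  -- compute the two trace sums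
  have adjV1 : ContinuousLinearMap.adjoint V1 = (B.comp B').comp T' := by
    rw [hV1def, ContinuousLinearMap.adjoint_comp, ContinuousLinearMap.adjoint_comp, hT'def, hB',
      ContinuousLinearMap.adjoint_adjoint]
  have adjV2 : ContinuousLinearMap.adjoint V2 = (B'.comp B).comp T' := by
    rw [hV2def, ContinuousLinearMap.adjoint_comp, ContinuousLinearMap.adjoint_comp, hT'def, hB',
      ContinuousLinearMap.adjoint_adjoint]
  have claim1 : ∑' i, RCLike.re ⟪V1 (e i), T (e i)⟫_ℂ = ∑' j, ‖B' (T' (e j))‖ ^ 2 := by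
    rw [← RCLike.re_tsum _ (hs_summable_inner e V1 T hBB' hT),
      hs_trace_swap e V1 T hBB' hT,
      RCLike.re_tsum _ (hs_summable_inner e T' (ContinuousLinearMap.adjoint V1) hT'
        (hs_adjoint e V1 hBB'))]
    congr 1
    funext j
    rw [adjV1]
    have : ((B.comp B').comp T') (e j) = B (B' (T' (e j))) := rfl
    rw [this, ← ContinuousLinearMap.adjoint_inner_left B, ← hB', inner_self_eq_norm_sq]
  have claim2 : ∑' i, RCLike.re ⟪V2 (e i), T (e i)⟫_ℂ = ∑' j, ‖B (T' (e j))‖ ^ 2 := by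
    rw [← RCLike.re_tsum _ (hs_summable_inner e V2 T hB'B hT),
      hs_trace_swap e V2 T hB'B hT,
      RCLike.re_tsum _ (hs_summable_inner e T' (ContinuousLinearMap.adjoint V2) hT'
        (hs_adjoint e V2 hB'B))]
    congr 1
    funext j
    rw [adjV2]
    have h1 : ((B'.comp B).comp T') (e j) = B' (B (T' (e j))) := rfl
    rw [h1, ← ContinuousLinearMap.adjoint_inner_left B', hB',
      ContinuousLinearMap.adjoint_adjoint, inner_self_eq_norm_sq]
  rw [claim1, claim2]
  have part1 : 0 ≤ ∑' i, (‖A (T (e i))‖ ^ 2 - ‖A' (T (e i))‖ ^ 2) := by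
    apply tsum_nonneg
    intro i
    have := hA (T (e i))
    have h2 : ‖A' (T (e i))‖ ^ 2 ≤ ‖A (T (e i))‖ ^ 2 :=
      pow_le_pow_left₀ (norm_nonneg _) this 2
    linarith
  have part2 : ∑' j, ‖B (T' (e j))‖ ^ 2 ≤ ∑' j, ‖B' (T' (e j))‖ ^ 2 := by
    refine Summable.tsum_le_tsum (fun j => ?_) (hs_comp_left e B T' hT') (hs_comp_left e B' T' hT')
    exact pow_le_pow_left₀ (norm_nonneg _) (hB (T' (e j))) 2
  linarith
end
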